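/- For q ≥ 2, the border rank of the easy Coppersmith–Winograd tensor T_cw = Σ_{i=1}^q (e₀⊗eᵢ⊗eᵢ + eᵢ⊗e₀⊗eᵢ + eᵢ⊗eᵢ⊗e₀) ∈ ℂ^{q+1} ⊗ ℂ^{q+1} ⊗ ℂ^{q+1} equals q + 2. -/

import Mathlib

open scoped BigOperators

/-- `T` is a sum of `r` decomposable tensors (i.e. has rank at most `r`). -/
def rankLE {n₁ n₂ n₃ : ℕ} (T : Fin n₁ → Fin n₂ → Fin n₃ → ℂ) (r : ℕ) : Prop :=
  ∃ u : Fin r → Fin n₁ → ℂ, ∃ v : Fin r → Fin n₂ → ℂ, ∃ w : Fin r → Fin n₃ → ℂ,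
    T = fun i j k => ∑ s, u s i * v s j * w s k

/-- The border rank of a tensor: the least `r` such that `T` is a limit of
tensors of rank at most `r`. -/
noncomputable def bRank {n₁ n₂ n₃ : ℕ} (T : Fin n₁ → Fin n₂ → Fin n₃ → ℂ) : ℕ :=
  sInf {r | T ∈ closure {S | rankLE S r}}

/-- The coordinate of the standard basis vector `e_a` of `ℂⁿ`. -/
noncomputable def δ {n : ℕ} (a i : Fin n) : ℂ := if i = a then 1 else 0

/-- The easy Coppersmith–Winograd tensor
`T_cw = Σ_{i=1}^q (e₀⊗eᵢ⊗eᵢ + eᵢ⊗e₀⊗eᵢ + eᵢ⊗eᵢ⊗e₀) ∈ ℂ^{q+1} ⊗ ℂ^{q+1} ⊗ ℂ^{q+1}`,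
in coordinates. -/
noncomputable def Tcw (q : ℕ) : Fin (q + 1) → Fin (q + 1) → Fin (q + 1) → ℂ :=
  fun i j k =>
    ∑ t : Fin q,
      (δ 0 i * δ t.succ j * δ t.succ k +
       δ t.succ i * δ 0 j * δ t.succ k +
       δ t.succ i * δ t.succ j * δ 0 k)

/-!
Upper bound: for `t ≠ 0` the tensor `t • ∑ᵢ (e₀ + t eᵢ)^⊗3 - (e₀ + t² σ)^⊗3 + (1 - q t) • e₀^⊗3`,
with `σ = e₁ + ⋯ + e_q`, is a sum of `q + 2` cubes, and it equals `t³ (T_cw + t D₁ + t³ D₂)` for fixed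
tensors `D₁, D₂`; letting `t → 0` puts `T_cw` in the closure of the tensors of rank `≤ q + 2`.

Lower bound (Strassen's equations): the slices `S(x) = ∑ᵢ xᵢ Sᵢ` of a tensor of rank `≤ n` in
`ℂᵐ ⊗ ℂⁿ ⊗ ℂⁿ` factor as `V diag(⟨u, x⟩) W`, so the polynomial identity
`S(y) adj(S(x)) S(z) = S(z) adj(S(x)) S(y)` holds on them and hence on their closure. For `T_cw`,
`x = e₀ + e_a` gives an invertible slice, and `y = e_a`, `z = e_b` violate the identity, so `T_cw` is
not a limit of tensors of rank `≤ q + 1`.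
-/

open Matrix Filter Topology

section Rank

variable {n₁ n₂ n₃ : ℕ}

def tri : (Fin n₁ → ℂ) →ₗ[ℂ] (Fin n₂ → ℂ) →ₗ[ℂ] (Fin n₃ → ℂ) →ₗ[ℂ]
    (Fin n₁ → Fin n₂ → Fin n₃ → ℂ) := by
  refine LinearMap.mk₂ ℂ
    (fun u v => LinearMap.pi fun i => LinearMap.pi fun j => (u i * v j) • LinearMap.id)
    ?_ ?_ ?_ ?_ <;>
  · intros
    refine LinearMap.ext fun _ => ?_
    ext
    simp only [LinearMap.add_apply, LinearMap.pi_apply, LinearMap.smul_apply, LinearMap.id_apply,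
      Pi.add_apply, Pi.smul_apply, smul_eq_mul]
    ring

lemma tri_apply (u : Fin n₁ → ℂ) (v : Fin n₂ → ℂ) (w : Fin n₃ → ℂ) (i j k) :
    tri u v w i j k = u i * v j * w k := rfl

lemma rankLE_iff_eq_sum_tri {T : Fin n₁ → Fin n₂ → Fin n₃ → ℂ} {r : ℕ} :
    rankLE T r ↔ ∃ (u : Fin r → Fin n₁ → ℂ) (v : Fin r → Fin n₂ → ℂ) (w : Fin r → Fin n₃ → ℂ),
      T = ∑ s, tri (u s) (v s) (w s) := by
  simp only [rankLE, tri_apply, funext_iff, Finset.sum_apply]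

lemma rankLE_sum_tri {r : ℕ} (u : Fin r → Fin n₁ → ℂ) (v : Fin r → Fin n₂ → ℂ)
    (w : Fin r → Fin n₃ → ℂ) : rankLE (∑ s, tri (u s) (v s) (w s)) r :=
  rankLE_iff_eq_sum_tri.2 ⟨u, v, w, rfl⟩

lemma rankLE_tri (u : Fin n₁ → ℂ) (v : Fin n₂ → ℂ) (w : Fin n₃ → ℂ) : rankLE (tri u v w) 1 := by
  simpa using rankLE_sum_tri (fun _ : Fin 1 => u) (fun _ => v) (fun _ => w)

lemma rankLE_zero_tensor (r : ℕ) : rankLE (0 : Fin n₁ → Fin n₂ → Fin n₃ → ℂ) r :=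
  ⟨0, 0, 0, by ext; simp⟩

lemma rankLE.add {S T : Fin n₁ → Fin n₂ → Fin n₃ → ℂ} {r r' : ℕ} (hS : rankLE S r)
    (hT : rankLE T r') : rankLE (S + T) (r + r') := by
  obtain ⟨u, v, w, rfl⟩ := rankLE_iff_eq_sum_tri.1 hS
  obtain ⟨u', v', w', rfl⟩ := rankLE_iff_eq_sum_tri.1 hT
  simpa [Fin.sum_univ_add] using
    rankLE_sum_tri (Fin.append u u') (Fin.append v v') (Fin.append w w')

lemma rankLE.smul {T : Fin n₁ → Fin n₂ → Fin n₃ → ℂ} {r : ℕ} (hT : rankLE T r) (c : ℂ) :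
    rankLE (c • T) r := by
  obtain ⟨u, v, w, rfl⟩ := hT
  exact ⟨c • u, v, w, by ext; simp [Finset.mul_sum, mul_assoc]⟩

lemma rankLE.sub {S T : Fin n₁ → Fin n₂ → Fin n₃ → ℂ} {r r' : ℕ} (hS : rankLE S r)
    (hT : rankLE T r') : rankLE (S - T) (r + r') := by
  simpa [sub_eq_add_neg] using hS.add (hT.smul (-1))

lemma rankLE.mono {T : Fin n₁ → Fin n₂ → Fin n₃ → ℂ} {r r' : ℕ} (hT : rankLE T r) (h : r ≤ r') :
    rankLE T r' := by
  simpa [Nat.add_sub_cancel' h] using hT.add (rankLE_zero_tensor (r' - r))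

lemma bRank_eq_succ {T : Fin n₁ → Fin n₂ → Fin n₃ → ℂ} {r : ℕ}
    (hle : T ∈ closure {S | rankLE S (r + 1)}) (hnot : T ∉ closure {S | rankLE S r}) :
    bRank T = r + 1 :=
  (Nat.sInf_upward_closed_eq_succ_iff (s := {r | T ∈ closure {S | rankLE S r}})
    (fun _ _ h hT => closure_mono (fun _ hS => rankLE.mono hS h) hT) r).2 ⟨hle, hnot⟩

lemma mem_closure_rankLE_of_continuousAt {f : ℂ → Fin n₁ → Fin n₂ → Fin n₃ → ℂ} {r : ℕ}
    (hf : ContinuousAt f 0) (hrank : ∀ t ≠ 0, rankLE (f t) r) :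
    f 0 ∈ closure {S | rankLE S r} :=
  mem_closure_of_tendsto (hf.tendsto.mono_left nhdsWithin_le_nhds)
    (eventually_nhdsWithin_of_forall (s := {0}ᶜ) hrank)

end Rank

section UpperBound

lemma Tcw_eq_sum_tri (q : ℕ) : Tcw q = ∑ s : Fin q,
    (tri (δ 0) (δ s.succ) (δ s.succ) + tri (δ s.succ) (δ 0) (δ s.succ) +
      tri (δ s.succ) (δ s.succ) (δ 0)) := by
  ext i j k
  simp only [Tcw, Finset.sum_apply, Pi.add_apply, tri_apply]

noncomputable def cwCurve (q : ℕ) (t : ℂ) : Fin (q + 1) → Fin (q + 1) → Fin (q + 1) → ℂ :=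
  let σ : Fin (q + 1) → ℂ := ∑ s : Fin q, δ s.succ
  Tcw q + t • (∑ s : Fin q, tri (δ s.succ) (δ s.succ) (δ s.succ) -
    (tri (δ 0) σ σ + tri σ (δ 0) σ + tri σ σ (δ 0))) - t ^ 3 • tri σ σ σ

lemma smul_cwCurve (q : ℕ) (t : ℂ) :
    let σ : Fin (q + 1) → ℂ := ∑ s : Fin q, δ s.succ
    t ^ 3 • cwCurve q t =
      t • ∑ s : Fin q, tri (δ 0 + t • δ s.succ) (δ 0 + t • δ s.succ) (δ 0 + t • δ s.succ) -
        tri (δ 0 + t ^ 2 • σ) (δ 0 + t ^ 2 • σ) (δ 0 + t ^ 2 • σ) +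
        (1 - q * t) • tri (δ 0) (δ 0) (δ 0) := by
  simp only [cwCurve, Tcw_eq_sum_tri, map_add, map_smul, map_sum, LinearMap.add_apply,
    LinearMap.smul_apply, LinearMap.coe_sum, Finset.sum_apply, Finset.sum_add_distrib,
    ← Finset.smul_sum, Finset.sum_const, Finset.card_univ, Fintype.card_fin]
  module

lemma continuous_cwCurve (q : ℕ) : Continuous (cwCurve q) := by
  unfold cwCurve
  fun_prop

lemma cwCurve_zero (q : ℕ) : cwCurve q 0 = Tcw q := by
  simp [cwCurve]

lemma rankLE_cwCurve {q : ℕ} {t : ℂ} (ht : t ≠ 0) : rankLE (cwCurve q t) (q + 2) := by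
  rw [← inv_smul_smul₀ (pow_ne_zero 3 ht) (cwCurve q t), smul_cwCurve]
  exact ((((rankLE_sum_tri _ _ _).smul t).sub (rankLE_tri _ _ _)).add
    ((rankLE_tri _ _ _).smul _)).smul _

lemma Tcw_mem_closure_rankLE (q : ℕ) : Tcw q ∈ closure {S | rankLE S (q + 2)} :=
  cwCurve_zero q ▸ mem_closure_rankLE_of_continuousAt (continuous_cwCurve q).continuousAt
    fun _ ht => rankLE_cwCurve ht

end UpperBound

section Strassen

variable {m n₂ n₃ : ℕ}

def slice (x : Fin m → ℂ) (S : Fin m → Fin n₂ → Fin n₃ → ℂ) : Matrix (Fin n₂) (Fin n₃) ℂ :=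
  ∑ i, x i • of (S i)

lemma slice_add_left (x y : Fin m → ℂ) (S : Fin m → Fin n₂ → Fin n₃ → ℂ) :
    slice (x + y) S = slice x S + slice y S := by
  simp only [slice, Pi.add_apply, add_smul, Finset.sum_add_distrib]

lemma slice_delta (a : Fin m) (S : Fin m → Fin n₂ → Fin n₃ → ℂ) : slice (δ a) S = of (S a) := by
  simp [slice, δ, ite_smul]

lemma continuous_slice (x : Fin m → ℂ) :
    Continuous (slice x : (Fin m → Fin n₂ → Fin n₃ → ℂ) → Matrix (Fin n₂) (Fin n₃) ℂ) := by
  unfold slice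
  fun_prop

lemma slice_sum_tri {r : ℕ} (x : Fin m → ℂ) (u : Fin r → Fin m → ℂ) (v : Fin r → Fin n₂ → ℂ)
    (w : Fin r → Fin n₃ → ℂ) :
    slice x (∑ s, tri (u s) (v s) (w s)) = (of v)ᵀ * diagonal (of u *ᵥ x) * of w := by
  ext j k
  simp only [slice, Finset.sum_apply, smul_of, Matrix.sum_apply, of_apply, Pi.smul_apply,
    tri_apply, smul_eq_mul, Finset.mul_sum, mul_apply, transpose_apply, diagonal_apply, mulVec,
    dotProduct, mul_ite, mul_zero, Finset.sum_ite_eq', Finset.mem_univ, ↓reduceIte,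
    Finset.sum_mul]
  rw [Finset.sum_comm]
  exact Finset.sum_congr rfl fun s _ => Finset.sum_congr rfl fun i _ => by ring

lemma Matrix.mul_adjugate_mul_comm_of_diagonal {ι R : Type*} [Fintype ι] [DecidableEq ι]
    [CommRing R] (V W : Matrix ι ι R) (a b c : ι → R) :
    V * diagonal b * W * (V * diagonal a * W).adjugate * (V * diagonal c * W) =
      V * diagonal c * W * (V * diagonal a * W).adjugate * (V * diagonal b * W) := by
  have key : ∀ d e : ι → R, V * diagonal d * W * (V * diagonal a * W).adjugate *
      (V * diagonal e * W) = (V.det * W.det) •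
        (V * (diagonal d * (diagonal a).adjugate * diagonal e) * W) := by
    intro d e
    simp only [adjugate_mul_distrib, Matrix.mul_assoc]
    rw [← Matrix.mul_assoc W W.adjugate, mul_adjugate, ← Matrix.mul_assoc V.adjugate V,
      adjugate_mul]
    simp only [Matrix.smul_mul, Matrix.mul_smul, Matrix.one_mul, smul_smul]
  rw [key, key, adjugate_diagonal]
  simp only [diagonal_mul_diagonal]
  congr 4
  funext i
  ring

lemma slice_mul_adjugate_mul_comm_of_rankLE {n m : ℕ} {S : Fin m → Fin n → Fin n → ℂ}
    (hS : rankLE S n) (x y z : Fin m → ℂ) :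
    slice y S * (slice x S).adjugate * slice z S = slice z S * (slice x S).adjugate * slice y S := by
  obtain ⟨u, v, w, rfl⟩ := rankLE_iff_eq_sum_tri.1 hS
  simp only [slice_sum_tri]
  exact mul_adjugate_mul_comm_of_diagonal _ _ _ _ _

lemma slice_mul_adjugate_mul_comm_of_mem_closure {n m : ℕ} {S : Fin m → Fin n → Fin n → ℂ}
    (hS : S ∈ closure {S | rankLE S n}) (x y z : Fin m → ℂ) :
    slice y S * (slice x S).adjugate * slice z S = slice z S * (slice x S).adjugate * slice y S :=
  closure_minimal (fun _ hS' => slice_mul_adjugate_mul_comm_of_rankLE hS' x y z)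
    (isClosed_eq (((continuous_slice y).matrix_mul (continuous_slice x).matrix_adjugate).matrix_mul
      (continuous_slice z)) (((continuous_slice z).matrix_mul
        (continuous_slice x).matrix_adjugate).matrix_mul (continuous_slice y))) hS

lemma Matrix.adjugate_eq_det_smul_of_mul_eq_one {ι R : Type*} [Fintype ι] [DecidableEq ι]
    [CommRing R] {A B : Matrix ι ι R} (h : A * B = 1) : A.adjugate = A.det • B :=
  calc A.adjugate = A.adjugate * (A * B) := by rw [h, Matrix.mul_one]
    _ = A.det • B := by rw [← Matrix.mul_assoc, adjugate_mul, Matrix.smul_mul, Matrix.one_mul]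

lemma slice_mul_mul_comm_of_mem_closure {n m : ℕ} {S : Fin m → Fin n → Fin n → ℂ}
    (hS : S ∈ closure {S | rankLE S n}) {x : Fin m → ℂ} {H : Matrix (Fin n) (Fin n) ℂ}
    (hH : slice x S * H = 1) (y z : Fin m → ℂ) :
    slice y S * H * slice z S = slice z S * H * slice y S := by
  have hdet : (slice x S).det ≠ 0 :=
    left_ne_zero_of_mul_eq_one (by rw [← det_mul, hH, det_one])
  have h := slice_mul_adjugate_mul_comm_of_mem_closure hS x y z
  rw [adjugate_eq_det_smul_of_mul_eq_one hH] at h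
  simpa [Matrix.mul_smul, Matrix.smul_mul, hdet] using h

end Strassen

section LowerBound

variable {ι R : Type*} [Fintype ι] [DecidableEq ι] [CommRing R] {o a b : ι}

def Matrix.symSingle (o a : ι) : Matrix ι ι R := single o a 1 + single a o 1

lemma of_Tcw_zero (q : ℕ) : of (Tcw q 0) = 1 - single 0 0 1 := by
  ext j k
  induction j using Fin.cases <;> induction k using Fin.cases <;>
    simp [Tcw, δ, one_apply, fun s : Fin q => (Fin.succ_ne_zero s).symm]

lemma of_Tcw_succ {q : ℕ} (a : Fin q) : of (Tcw q a.succ) = symSingle 0 a.succ := by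
  ext j k
  induction j using Fin.cases <;> induction k using Fin.cases <;>
    simp [Tcw, δ, symSingle, single_apply, fun s : Fin q => (Fin.succ_ne_zero s).symm]

-- On the coordinates `o, a` this is `!![0, 1; 1, 1] * !![-1, 1; 1, 0] = 1`.
lemma Matrix.one_sub_single_add_symSingle_mul (hoa : o ≠ a) :
    (1 - single o o 1 + symSingle o a : Matrix ι ι R) *
      (1 - single o o 1 + symSingle o a - single o o 1 - single a a 1) = 1 := by
  simp [symSingle, Matrix.mul_add, Matrix.add_mul, Matrix.mul_sub, Matrix.sub_mul, hoa, hoa.symm]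
  abel

lemma Matrix.symSingle_mul_mul_symSingle_ne [Nontrivial R] (hoa : o ≠ a) (hob : o ≠ b)
    (hab : a ≠ b) :
    let H : Matrix ι ι R := 1 - single o o 1 + symSingle o a - single o o 1 - single a a 1
    symSingle o a * H * symSingle o b ≠ symSingle o b * H * symSingle o a := by
  intro H h
  have := congrFun (congrFun h o) b
  simp [H, symSingle, Matrix.mul_add, Matrix.add_mul, Matrix.mul_sub, Matrix.sub_mul, hoa,
    hoa.symm, hob, hob.symm, hab, hab.symm] at this

lemma Tcw_not_mem_closure_rankLE {q : ℕ} (hq : 2 ≤ q) :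
    Tcw q ∉ closure {S | rankLE S (q + 1)} := by
  have : Nontrivial (Fin q) := Fin.nontrivial_iff_two_le.2 hq
  obtain ⟨a, b, hab⟩ := exists_pair_ne (Fin q)
  have hX : slice (δ 0 + δ a.succ) (Tcw q) *
      (1 - single 0 0 1 + symSingle 0 a.succ - single 0 0 1 - single a.succ a.succ 1) = 1 := by
    rw [slice_add_left, slice_delta, slice_delta, of_Tcw_zero, of_Tcw_succ]
    exact one_sub_single_add_symSingle_mul (Fin.succ_ne_zero a).symm
  intro h
  have hcomm := slice_mul_mul_comm_of_mem_closure h hX (δ a.succ) (δ b.succ)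
  rw [slice_delta, slice_delta, of_Tcw_succ, of_Tcw_succ] at hcomm
  exact symSingle_mul_mul_symSingle_ne (Fin.succ_ne_zero a).symm (Fin.succ_ne_zero b).symm
    (Fin.succ_inj.not.2 hab) hcomm

end LowerBound

/-- for `q ≥ 2` the border rank of the easy Coppersmith–Winograd
tensor equals `q + 2`. -/
theorem stmt14 (q : ℕ) (hq : 2 ≤ q) : bRank (Tcw q) = q + 2 :=
  bRank_eq_succ (Tcw_mem_closure_rankLE q) (Tcw_not_mem_closure_rankLE hq)
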